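/- arXiv:2205.02216 — 5 statements merged into one kernel-verified Lean document; each statement's English description precedes it below -/
import Mathlib

section
/- For any K-user topology α, any subset S ⊆ [K] of users, and any power allocation r with r_k ≤ 0 achieving positive GDoF d_k(α,r) > 0 for all k ∈ S: if S = {β_1,...,β_L} with L > 1 and r_{β_1} ≥ r_{β_2} ≥ ... ≥ r_{β_L}, then D_{Σ,b}(α) ≥ Σ_{i=1}^{L-1} (d_{β_i}(α,r) + r_{β_L} - r_{β_i}) + (d_{β_L}(α,r) + r_{β_{L-1}} - r_{β_L}). -/
/-! A user `k` with positive GDoF has `d_k = α_kk + r_k - M_k`, where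
`M_k = max_{j ≠ k} (α_kj + r_j)^+ ≥ α_kj + r_j`. So if the other active users `j ∈ T` all have
`r_j ≥ c` for some `c ≤ 0`, the binary interference `max_{j ∈ T, j ≠ k} α_kj` at `k` is at most
`M_k - c`, and the binary term of `k` is at least `d_k + c - r_k`. Take `T = {β_1, …, β_L}`,
with `c = r_{β_L}` for `β_i`, `i < L`, and `c = r_{β_{L-1}}` for `β_L`. -/

open Finset

/-- Positive part `(x)^+ = max(x,0)`. -/
noncomputable def pPart (x : ℝ) : ℝ := max x 0

/-- TIN GDoF of user `k` under topology `α` and power allocation `r`: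
`d_k(α,r) = (α_kk + r_k - max_{j≠k} (α_kj + r_j)^+)^+` (max over the empty set is 0). -/
noncomputable def gdof {K : ℕ} (α : Fin K → Fin K → ℝ) (r : Fin K → ℝ) (k : Fin K) : ℝ :=
  pPart (α k k + r k -
    ((Finset.univ.erase k).fold max 0 fun j => pPart (α k j + r j)))

/-- Sum GDoF under allocation `r`. -/
noncomputable def sumGdof {K : ℕ} (α : Fin K → Fin K → ℝ) (r : Fin K → ℝ) : ℝ :=
  ∑ k, gdof α r k

/-- Optimal-power-control sum GDoF: supremum over all allocations with `r_k ≤ 0`. -/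
noncomputable def Dopt {K : ℕ} (α : Fin K → Fin K → ℝ) : ℝ :=
  sSup {x : ℝ | ∃ r : Fin K → ℝ, (∀ k, r k ≤ 0) ∧ x = sumGdof α r}

/-- Sum GDoF achieved by binary power control with active set `T`:
`Σ_{k∈T} (α_kk - max_{j∈T, j≠k} α_kj)^+` (max over the empty set is 0). -/
noncomputable def binSum {K : ℕ} (α : Fin K → Fin K → ℝ) (T : Finset (Fin K)) : ℝ :=
  ∑ k ∈ T, pPart (α k k - ((T.erase k).fold max 0 fun j => α k j))

/-- Binary-power-control sum GDoF: maximum over all subsets of active users. -/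
noncomputable def Dbin {K : ℕ} (α : Fin K → Fin K → ℝ) : ℝ :=
  (Finset.univ : Finset (Finset (Fin K))).sup' ⟨∅, Finset.mem_univ ∅⟩ (binSum α)

lemma pPart_eq_self_of_pos {x : ℝ} (h : 0 < pPart x) : pPart x = x := by
  unfold pPart at h ⊢
  rcases le_total x 0 with hx | hx
  · rw [max_eq_right hx] at h
    exact absurd h (lt_irrefl 0)
  · exact max_eq_left hx

section Gdof

variable {K : ℕ} (α : Fin K → Fin K → ℝ) (r : Fin K → ℝ)

lemma gdof_eq_of_pos {k : Fin K} (h : 0 < gdof α r k) :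
    gdof α r k = α k k + r k - (univ.erase k).fold max 0 fun j => pPart (α k j + r j) :=
  pPart_eq_self_of_pos h

lemma add_le_fold_interference {j k : Fin K} (hjk : j ≠ k) :
    α k j + r j ≤ (univ.erase k).fold max 0 fun j => pPart (α k j + r j) :=
  (le_max_left _ _).trans
    ((le_fold_max _).2 (Or.inr ⟨j, mem_erase.2 ⟨hjk, mem_univ j⟩, le_rfl⟩))

lemma gdof_add_sub_le_binTerm {k : Fin K} (T : Finset (Fin K)) {c : ℝ} (hc : c ≤ 0)
    (hpos : 0 < gdof α r k) (hT : ∀ j ∈ T.erase k, c ≤ r j) :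
    gdof α r k + c - r k ≤ pPart (α k k - (T.erase k).fold max 0 fun j => α k j) := by
  set M := (univ.erase k).fold max 0 fun j => pPart (α k j + r j)
  have hM : 0 ≤ M := (le_fold_max _).2 (Or.inl le_rfl)
  have hinterference : ((T.erase k).fold max 0 fun j => α k j) ≤ M - c := by
    refine (fold_max_le _).2 ⟨by linarith, fun j hj => ?_⟩
    have := add_le_fold_interference α r (ne_of_mem_erase hj)
    linarith [hT j hj]
  calc gdof α r k + c - r k = α k k - M + c := by rw [gdof_eq_of_pos α r hpos]; ring
    _ ≤ α k k - (T.erase k).fold max 0 fun j => α k j := by linarith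
    _ ≤ _ := le_max_left _ _

lemma sum_gdof_add_sub_le_binSum_image {ι : Type*} [Fintype ι] (β : ι → Fin K)
    (hβ : Function.Injective β) (c : ι → ℝ) (hc : ∀ i, c i ≤ 0)
    (hpos : ∀ i, 0 < gdof α r (β i)) (hcr : ∀ i i', i ≠ i' → c i ≤ r (β i')) :
    ∑ i, (gdof α r (β i) + c i - r (β i)) ≤ binSum α (univ.image β) := by
  rw [binSum, sum_image fun _ _ _ _ h => hβ h]
  gcongr with i
  refine gdof_add_sub_le_binTerm α r _ (hc i) (hpos i) fun j hj => ?_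
  obtain ⟨i', -, rfl⟩ := mem_image.1 (mem_of_mem_erase hj)
  exact hcr i i' fun h => ne_of_mem_erase hj (by rw [h])

lemma binSum_le_Dbin (T : Finset (Fin K)) : binSum α T ≤ Dbin α :=
  le_sup' (binSum α) (mem_univ T)

end Gdof

/-- the binary bound `B_{[β_1,…,β_L]}` for `L > 1`: if the users `β_1,…,β_L`
(distinct, with `r_{β_1} ≥ … ≥ r_{β_L}`) all achieve positive GDoF under `r`, then
`D_{Σ,b}(α) ≥ Σ_{i<L} (d_{β_i} + r_{β_L} - r_{β_i}) + (d_{β_L} + r_{β_{L-1}} - r_{β_L})`. -/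
theorem stmt_2 (K L : ℕ) (hL : 1 < L)
    (α : Fin K → Fin K → ℝ)
    (r : Fin K → ℝ) (hr : ∀ k, r k ≤ 0)
    (β : Fin L → Fin K) (hβ : Function.Injective β)
    (hmono : ∀ i j : Fin L, i ≤ j → r (β j) ≤ r (β i))
    (hpos : ∀ i : Fin L, 0 < gdof α r (β i)) :
    (∑ i ∈ Finset.univ.erase (⟨L - 1, by omega⟩ : Fin L),
        (gdof α r (β i) + r (β ⟨L - 1, by omega⟩) - r (β i)))
      + (gdof α r (β ⟨L - 1, by omega⟩) + r (β ⟨L - 2, by omega⟩)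
          - r (β ⟨L - 1, by omega⟩))
      ≤ Dbin α := by
  set last : Fin L := ⟨L - 1, by omega⟩
  set pre : Fin L := ⟨L - 2, by omega⟩
  have hbound := sum_gdof_add_sub_le_binSum_image α r β hβ
    (fun i => if i = last then r (β pre) else r (β last))
    (fun i => by split_ifs <;> apply hr) hpos fun i i' hii' => by
      split_ifs with hi
      · subst hi
        have hne := Fin.val_ne_of_ne hii'
        exact hmono i' pre (Fin.le_def.2 (by simp only [last, pre] at hne ⊢; omega))
      · exact hmono i' last (Fin.le_def.2 (by simp only [last]; omega))
  rw [← sum_erase_add _ _ (mem_univ last), if_pos rfl,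
    sum_congr rfl fun i hi => by rw [if_neg (ne_of_mem_erase hi)]] at hbound
  exact hbound.trans (binSum_le_Dbin α _)
end

section
/- For the 5-user topology α with direct gains α_11 = α_22 = α_33 = 2, α_44 = α_55 = 4; cross gains α_i3 = 1 for i ∈ {1,2,4,5}; α_i4 = 2 for i ∈ {1,2,3,5}; α_i5 = 2 for i ∈ {1,2,3,4}; and all other cross gains 0: the power allocation r = (0,0,-1,-2,-2) achieves the GDoF tuple (2,2,1,2,2), so D_{Σ,o}(α) ≥ 9, while D_{Σ,b}(α) = 4. Hence the gain of optimal over binary power control for this topology is at least 9/4. -/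
open Finset

lemma erase_mk' {X : Type*} [DecidableEq X] (l : List X) (h : Multiset.Nodup (l : Multiset X)) (a : X) :
    (⟨↑l, h⟩ : Finset X).erase a
      = ⟨↑(l.erase a), Multiset.coe_nodup.2 ((Multiset.coe_nodup.1 h).erase a)⟩ := by
  apply Finset.eq_of_veq
  simp [Finset.erase_val]

lemma fold_mk' {X : Type*} (l : List X) (h : Multiset.Nodup (l : Multiset X)) (f : X → ℝ) :
    (⟨↑l, h⟩ : Finset X).fold max 0 f = (l.map f).foldr max 0 := rfl

lemma mk_single' {X : Type*} (a : X) (h : Multiset.Nodup {a}) : (⟨{a}, h⟩ : Finset X) = {a} := rfl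

lemma pPart_le_of_le {x y : ℝ} (h : x ≤ y) : pPart x ≤ max y 0 := max_le_max h le_rfl

lemma fold_max_nonneg {K : ℕ} (s : Finset (Fin K)) (f : Fin K → ℝ) :
    0 ≤ s.fold max 0 f := by
  induction s using Finset.induction with
  | empty => simp
  | @insert _ _ h ih => rw [Finset.fold_insert h]; exact le_max_of_le_right ih

set_option maxHeartbeats 4000000 in
/-- for the 5-user extremal topology, `r = (0,0,-1,-2,-2)` achieves the
GDoF tuple `(2,2,1,2,2)`, so `D_{Σ,o}(α) ≥ 9`, while `D_{Σ,b}(α) = 4`; gain ≥ 9/4. -/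
theorem stmt_7 (α : Fin 5 → Fin 5 → ℝ)
    (hα : α = ![![2, 0, 1, 2, 2], ![0, 2, 1, 2, 2], ![0, 0, 2, 2, 2],
                ![0, 0, 1, 4, 2], ![0, 0, 1, 2, 4]])
    (r : Fin 5 → ℝ) (hr : r = ![0, 0, -1, -2, -2]) :
    (∀ k, gdof α r k = ![2, 2, 1, 2, 2] k) ∧ (9 : ℝ) ≤ Dopt α ∧ Dbin α = 4 ∧
    (9 / 4 : ℝ) ≤ Dopt α / Dbin α := by
  subst hα hr
  have hg : ∀ k, gdof (![![2, 0, 1, 2, 2], ![0, 2, 1, 2, 2], ![0, 0, 2, 2, 2],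
      ![0, 0, 1, 4, 2], ![0, 0, 1, 2, 4]] : Fin 5 → Fin 5 → ℝ) ![0, 0, -1, -2, -2] k
      = ![2, 2, 1, 2, 2] k := by
    intro k
    have hu : (Finset.univ : Finset (Fin 5)) = {0, 1, 2, 3, 4} := by decide
    fin_cases k <;>
    · simp +decide [gdof, pPart, hu, Finset.fold_insert, Finset.fold_singleton,
        Finset.erase_insert, Finset.erase_insert_of_ne, Finset.erase_singleton]
      try norm_num
  have hA : (![![2, 0, 1, 2, 2], ![0, 2, 1, 2, 2], ![0, 0, 2, 2, 2],
      ![0, 0, 1, 4, 2], ![0, 0, 1, 2, 4]] : Fin 5 → Fin 5 → ℝ) =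
      (![![2, 0, 1, 2, 2], ![0, 2, 1, 2, 2], ![0, 0, 2, 2, 2],
      ![0, 0, 1, 4, 2], ![0, 0, 1, 2, 4]] : Fin 5 → Fin 5 → ℝ) := rfl
  set A : Fin 5 → Fin 5 → ℝ := (![![2, 0, 1, 2, 2], ![0, 2, 1, 2, 2], ![0, 0, 2, 2, 2],
      ![0, 0, 1, 4, 2], ![0, 0, 1, 2, 4]] : Fin 5 → Fin 5 → ℝ) with hAdef
  have hdiag : ∀ k : Fin 5, A k k ≤ 4 := by intro k; fin_cases k <;> norm_num [hAdef]
  have hbdd : BddAbove {x : ℝ | ∃ r : Fin 5 → ℝ, (∀ k, r k ≤ 0) ∧ x = sumGdof A r} := by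
    refine ⟨20, ?_⟩
    rintro x ⟨r', hr', rfl⟩
    have hk : ∀ k, gdof A r' k ≤ 4 := by
      intro k
      have h1 : 0 ≤ (Finset.univ.erase k).fold max 0 fun j => pPart (A k j + r' j) :=
        fold_max_nonneg _ _
      calc gdof A r' k ≤ max (A k k + r' k - 0) 0 := pPart_le_of_le (by linarith)
        _ ≤ max 4 0 := max_le_max (by have := hr' k; have := hdiag k; linarith) le_rfl
        _ ≤ 4 := by norm_num
    calc sumGdof A r' = ∑ k, gdof A r' k := rfl
      _ ≤ ∑ _k : Fin 5, (4 : ℝ) := Finset.sum_le_sum fun k _ => hk k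
      _ = 20 := by simp; norm_num
  have hsum : sumGdof A ![0, 0, -1, -2, -2] = 9 := by
    rw [sumGdof, Fin.sum_univ_five, hg 0, hg 1, hg 2, hg 3, hg 4]
    show (2:ℝ) + 2 + 1 + 2 + 2 = 9
    norm_num
  have hDopt : (9 : ℝ) ≤ Dopt A := by
    apply le_csSup hbdd
    exact ⟨![0, 0, -1, -2, -2], by intro k; fin_cases k <;> norm_num, hsum.symm⟩
  have hbin_le : ∀ T : Finset (Fin 5), binSum A T ≤ 4 := by
    intro T
    fin_cases T <;>
    · simp +decide [hAdef, binSum, pPart, mk_single', erase_mk', fold_mk', List.erase,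
        Finset.erase_singleton]
      try norm_num
  have hbin3 : binSum A {3} = 4 := by
    simp [binSum, pPart, Finset.erase_singleton, hAdef]
    try norm_num
  have hDbin : Dbin A = 4 := by
    apply le_antisymm
    · exact Finset.sup'_le _ _ fun T _ => hbin_le T
    · rw [← hbin3]; exact Finset.le_sup' (binSum A) (Finset.mem_univ {3})
  refine ⟨hg, hDopt, hDbin, ?_⟩
  rw [hDbin]
  linarith
end

section
/- Let m ≥ 1 and K = m². Consider the K-user topology α where users are partitioned into m groups G_1,...,G_m of m users each (G_g = {(g-1)m+1, ..., gm}), with α_kk = g for every user k ∈ G_g, cross gains α_ij = g - 1 whenever j ∈ G_g, i ≠ j, and i belongs to a group G_h with h ≤ g, and α_ij = 0 whenever i ∈ G_h with h > g. Then the power allocation r_k = 1 - g for k ∈ G_g achieves d_k(α,r) = 1 for every user k, so D_{Σ,o}(α) ≥ m². -/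
open Finset

/-!
A user whose every interfering link arrives at or below the noise floor (`α_kj + r_j ≤ 0`)
sees no interference, so it gets `(α_kk + r_k)^+` GDoF. With `r_k = 1 - g` the interference
from a user of group `g` arrives at level `g - 1 + (1 - g) = 0` at users of lower or equal
groups and at level `1 - g ≤ 0` at users of higher groups, while every user's own signal
arrives at level `g + (1 - g) = 1`.
-/

lemma fold_max_zero_nonneg {ι : Type*} (s : Finset ι) (f : ι → ℝ) : 0 ≤ s.fold max 0 f :=
  (Finset.le_fold_max 0).mpr (Or.inl le_rfl)

lemma pPart_of_nonneg {x : ℝ} (hx : 0 ≤ x) : pPart x = x := max_eq_left hx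

lemma pPart_of_nonpos {x : ℝ} (hx : x ≤ 0) : pPart x = 0 := max_eq_right hx

lemma gdof_eq_of_interference_nonpos {K : ℕ} {α : Fin K → Fin K → ℝ} {r : Fin K → ℝ}
    {k : Fin K} (h : ∀ j, j ≠ k → α k j + r j ≤ 0) :
    gdof α r k = pPart (α k k + r k) := by
  have hfold : ((Finset.univ.erase k).fold max 0 fun j => pPart (α k j + r j)) = 0 := by
    refine le_antisymm ((Finset.fold_max_le 0).mpr ⟨le_rfl, fun j hj => ?_⟩)
      (fold_max_zero_nonneg _ _)
    exact (pPart_of_nonpos (h j (Finset.ne_of_mem_erase hj))).le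
  rw [gdof, hfold, sub_zero]

lemma gdof_le_pPart_diag {K : ℕ} (α : Fin K → Fin K → ℝ) {r : Fin K → ℝ} (hr : ∀ k, r k ≤ 0)
    (k : Fin K) : gdof α r k ≤ pPart (α k k) := by
  have hfold := fold_max_zero_nonneg (Finset.univ.erase k) fun j => pPart (α k j + r j)
  exact max_le_max (by linarith [hr k]) le_rfl

-- `sSup` of a set unbounded above would be the junk value `0`; `d_k ≤ (α_kk)^+` bounds it.
lemma sumGdof_le_Dopt {K : ℕ} (α : Fin K → Fin K → ℝ) {r : Fin K → ℝ} (hr : ∀ k, r k ≤ 0) :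
    sumGdof α r ≤ Dopt α := by
  refine le_csSup ⟨∑ k, pPart (α k k), ?_⟩ ⟨r, hr, rfl⟩
  rintro x ⟨r', hr', rfl⟩
  exact Finset.sum_le_sum fun k _ => gdof_le_pPart_diag α hr' k

theorem stmt_9_general (m : ℕ)
    (g : Fin (m * m) → ℕ) (hg : ∀ k, g k = k.val / m + 1)
    (α : Fin (m * m) → Fin (m * m) → ℝ)
    (hdiag : ∀ k, α k k = (g k : ℝ))
    (hcross : ∀ i j, i ≠ j → α i j = if g i ≤ g j then (g j : ℝ) - 1 else 0)
    (r : Fin (m * m) → ℝ) (hr : ∀ k, r k = 1 - (g k : ℝ)) :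
    (∀ k, gdof α r k = 1) ∧ ((m : ℝ) ^ 2 ≤ Dopt α) := by
  have hg1 : ∀ k, (1 : ℝ) ≤ g k := fun k => by rw [hg]; exact_mod_cast Nat.le_add_left 1 _
  have hinterference : ∀ k j, j ≠ k → α k j + r j ≤ 0 := by
    intro k j hjk
    rw [hcross k j hjk.symm, hr]
    split_ifs
    · linarith
    · linarith [hg1 j]
  have hgdof : ∀ k, gdof α r k = 1 := by
    intro k
    rw [gdof_eq_of_interference_nonpos (hinterference k), hdiag, hr, add_sub_cancel,
      pPart_of_nonneg zero_le_one]
  refine ⟨hgdof, ?_⟩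
  calc (m : ℝ) ^ 2 = sumGdof α r := by simp [sumGdof, hgdof, sq]
    _ ≤ Dopt α := sumGdof_le_Dopt α fun k => by linarith [hr k, hg1 k]

/-- for the hierarchical topology with `m` groups of `m` users
(`g k = ⌊k/m⌋ + 1` is the group index of user `k`), the allocation `r_k = 1 - g k`
gives every user exactly 1 GDoF, hence `D_{Σ,o}(α) ≥ m²`. -/
theorem stmt_9 (m : ℕ) (hm : 1 ≤ m)
    (g : Fin (m * m) → ℕ) (hg : ∀ k, g k = k.val / m + 1)
    (α : Fin (m * m) → Fin (m * m) → ℝ)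
    (hdiag : ∀ k, α k k = (g k : ℝ))
    (hcross : ∀ i j, i ≠ j → α i j = if g i ≤ g j then (g j : ℝ) - 1 else 0)
    (r : Fin (m * m) → ℝ) (hr : ∀ k, r k = 1 - (g k : ℝ)) :
    (∀ k, gdof α r k = 1) ∧ ((m : ℝ) ^ 2 ≤ Dopt α) :=
  stmt_9_general m g hg α hdiag hcross r hr
end

section
/- Upper bound for K = m² via cycle-type binary bounds: let K = m² with m ≥ 1, and let α be a K-user topology with a power allocation r (r_k ≤ 0) such that d_k(α,r) > 0 for all k and, after relabeling, r_1 ≥ r_2 ≥ ... ≥ r_K. Assume the binary-bound inequalities of Lemma B hold (i.e., for each L-subset S = {β_1 < ... < β_L} with r_{β_1} ≥ ... ≥ r_{β_L}, D_{Σ,b}(α) ≥ Σ_{i<L}(d_{β_i} + r_{β_L} - r_{β_i}) + (d_{β_L} + r_{β_{L-1}} - r_{β_L}) for L > 1, and D_{Σ,b}(α) ≥ d_{β_1} - r_{β_1} for L = 1). Then m · Σ_{k=1}^{K} d_k(α,r) ≤ m(3m/2 - 1/2) · D_{Σ,b}(α). -/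
open Finset

private lemma gauss_real (n : ℕ) : ∑ j ∈ Finset.range n, (j : ℝ) = (n : ℝ) * ((n : ℝ) - 1) / 2 := by
  induction n with
  | zero => simp
  | succ k ih => rw [Finset.sum_range_succ, ih]; push_cast; ring

private lemma aux_ineq (m : ℕ) (hm2 : 2 ≤ m) (dd rr : ℕ → ℝ) (D : ℝ)
    (hrr : ∀ k, rr k ≤ 0)
    (hsingle : ∀ k, k < m * m → dd k - rr k ≤ D)
    (hwin : ∀ s L, 2 ≤ L → s + L ≤ m * m →
      (∑ j ∈ Finset.range L, dd (s + j))
        + (∑ j ∈ Finset.range (L - 2), (rr (s + (L - 1)) - rr (s + j))) ≤ D) :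
    (m : ℝ) * (∑ k ∈ Finset.range (m * m), dd k) ≤ (m : ℝ) * (3 * (m : ℝ) / 2 - 1 / 2) * D := by
  obtain ⟨n, rfl⟩ : ∃ n, m = n + 2 := ⟨m - 2, by omega⟩
  push_cast
  have h2m : 2 * (n + 2) ≤ (n + 2) * (n + 2) := Nat.mul_le_mul_right _ (by omega)
  set K := (n + 2) * (n + 2) with hK
  set q := K - (n + 2) + 1 with hq
  -- shift lemma
  have hshift : ∀ (f : ℕ → ℝ) (t w : ℕ),
      ∑ s ∈ Finset.range w, f (s + t)
        = (∑ k ∈ Finset.range (t + w), f k) - ∑ k ∈ Finset.range t, f k := by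
    intro f t w
    rw [← Finset.sum_Ico_eq_sub f (Nat.le_add_right t w),
        Finset.sum_Ico_eq_sum_range f t (t + w),
        show t + w - t = w from by omega]
    exact Finset.sum_congr rfl fun s _ => by rw [Nat.add_comm]
  -- groups of bounds
  set A := ∑ s ∈ Finset.range q,
      ((∑ j ∈ Finset.range (n + 2), dd (s + j))
        + (∑ j ∈ Finset.range n, (rr (s + (n + 1)) - rr (s + j)))) with hA
  set B := ∑ i ∈ Finset.range n,
      ((∑ j ∈ Finset.range (i + 2), dd j)
        + (∑ j ∈ Finset.range i, (rr (i + 1) - rr j))) with hBdef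
  set E := ∑ j ∈ Finset.range (n + 2), ∑ k ∈ Finset.Ico (j + q) K, (dd k - rr k) with hE
  -- upper bounds on groups
  have hAle : A ≤ (q : ℝ) * D := by
    have hb : ∀ s ∈ Finset.range q,
        ((∑ j ∈ Finset.range (n + 2), dd (s + j))
          + (∑ j ∈ Finset.range n, (rr (s + (n + 1)) - rr (s + j)))) ≤ D := by
      intro s hs
      rw [Finset.mem_range] at hs
      have h2 := hwin s (n + 2) (by omega) (by omega)
      rw [show n + 2 - 2 = n from by omega, show n + 2 - 1 = n + 1 from by omega] at h2
      exact h2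
    calc A ≤ (Finset.range q).card • D := Finset.sum_le_card_nsmul _ _ _ hb
      _ = (q : ℝ) * D := by rw [Finset.card_range, nsmul_eq_mul]
  have hBle : B ≤ (n : ℝ) * D := by
    have hb : ∀ i ∈ Finset.range n,
        ((∑ j ∈ Finset.range (i + 2), dd j)
          + (∑ j ∈ Finset.range i, (rr (i + 1) - rr j))) ≤ D := by
      intro i hi
      rw [Finset.mem_range] at hi
      have h2 := hwin 0 (i + 2) (by omega) (by omega)
      rw [show i + 2 - 2 = i from by omega, show i + 2 - 1 = i + 1 from by omega] at h2
      simpa using h2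
    calc B ≤ (Finset.range n).card • D := Finset.sum_le_card_nsmul _ _ _ hb
      _ = (n : ℝ) * D := by rw [Finset.card_range, nsmul_eq_mul]
  have hCle : dd 0 - rr 0 ≤ D := hsingle 0 (by omega)
  have hEle : E ≤ ((n : ℝ) + 2) * ((n : ℝ) + 1) / 2 * D := by
    have hb : ∀ j ∈ Finset.range (n + 2),
        (∑ k ∈ Finset.Ico (j + q) K, (dd k - rr k)) ≤ ((n + 1 - j : ℕ) : ℝ) * D := by
      intro j hj
      rw [Finset.mem_range] at hj
      have h1 : ∀ k ∈ Finset.Ico (j + q) K, dd k - rr k ≤ D := fun k hk =>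
        hsingle k (Finset.mem_Ico.mp hk).2
      calc (∑ k ∈ Finset.Ico (j + q) K, (dd k - rr k))
          ≤ (Finset.Ico (j + q) K).card • D := Finset.sum_le_card_nsmul _ _ _ h1
        _ = ((n + 1 - j : ℕ) : ℝ) * D := by
            rw [Nat.card_Ico, show K - (j + q) = n + 1 - j from by omega, nsmul_eq_mul]
    calc E ≤ ∑ j ∈ Finset.range (n + 2), ((n + 1 - j : ℕ) : ℝ) * D := Finset.sum_le_sum hb
      _ = (∑ j ∈ Finset.range (n + 2), ((n + 1 - j : ℕ) : ℝ)) * D := by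
          rw [Finset.sum_mul]
      _ = (∑ j ∈ Finset.range (n + 2), (j : ℝ)) * D := by
          rw [show (∑ j ∈ Finset.range (n + 2), ((n + 1 - j : ℕ) : ℝ))
              = ∑ j ∈ Finset.range (n + 2), ((n + 2 - 1 - j : ℕ) : ℝ) from
            Finset.sum_congr rfl fun j hj => by congr 1,
            Finset.sum_range_reflect (fun j => (j : ℝ)) (n + 2)]
      _ = ((n : ℝ) + 2) * ((n : ℝ) + 1) / 2 * D := by
          rw [gauss_real]; push_cast; ring
  -- d-part identity
  have hVE : ∀ j ∈ Finset.range (n + 2),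
      ((∑ s ∈ Finset.range q, dd (s + j)) + ∑ k ∈ Finset.Ico (j + q) K, dd k)
        = (∑ k ∈ Finset.range K, dd k) - ∑ k ∈ Finset.range j, dd k := by
    intro j hj
    rw [Finset.mem_range] at hj
    rw [hshift dd j q, Finset.sum_Ico_eq_sub dd (show j + q ≤ K from by omega),
        show j + q = K - (n + 1 - j) from by omega]
    have h9 : K - (n + 1 - j) = j + q := by omega
    rw [h9]
    ring
  have h1 : (∑ j ∈ Finset.range (n + 2), ∑ s ∈ Finset.range q, dd (s + j))
        + (∑ j ∈ Finset.range (n + 2), ∑ k ∈ Finset.Ico (j + q) K, dd k)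
      = ((n : ℝ) + 2) * (∑ k ∈ Finset.range K, dd k)
        - ∑ j ∈ Finset.range (n + 2), ∑ k ∈ Finset.range j, dd k := by
    calc (∑ j ∈ Finset.range (n + 2), ∑ s ∈ Finset.range q, dd (s + j))
          + (∑ j ∈ Finset.range (n + 2), ∑ k ∈ Finset.Ico (j + q) K, dd k)
        = ∑ j ∈ Finset.range (n + 2),
            ((∑ k ∈ Finset.range K, dd k) - ∑ k ∈ Finset.range j, dd k) := by
          rw [← Finset.sum_add_distrib]; exact Finset.sum_congr rfl hVE
      _ = _ := by
          rw [Finset.sum_sub_distrib, Finset.sum_const, Finset.card_range, nsmul_eq_mul]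
          push_cast; ring
  have h2 : (∑ i ∈ Finset.range n, ∑ j ∈ Finset.range (i + 2), dd j) + dd 0
      = ∑ j ∈ Finset.range (n + 2), ∑ k ∈ Finset.range j, dd k := by
    have hs : ∑ i ∈ Finset.range n, (∑ k ∈ Finset.range (i + 2), dd k)
        = (∑ u ∈ Finset.range (2 + n), ∑ k ∈ Finset.range u, dd k)
          - ∑ u ∈ Finset.range 2, ∑ k ∈ Finset.range u, dd k :=
      hshift (fun u => ∑ k ∈ Finset.range u, dd k) 2 n
    have h2' : ∑ u ∈ Finset.range 2, ∑ k ∈ Finset.range u, dd k = dd 0 := by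
      rw [show (2 : ℕ) = 1 + 1 from rfl, Finset.sum_range_succ, Finset.sum_range_one,
          Finset.sum_range_zero, Finset.sum_range_one]
      ring
    rw [hs, h2', show 2 + n = n + 2 from by omega]
    ring
  have hcomm : ∑ s ∈ Finset.range q, ∑ j ∈ Finset.range (n + 2), dd (s + j)
      = ∑ j ∈ Finset.range (n + 2), ∑ s ∈ Finset.range q, dd (s + j) := Finset.sum_comm
  have hDtot : (∑ s ∈ Finset.range q, ∑ j ∈ Finset.range (n + 2), dd (s + j))
      + ((∑ i ∈ Finset.range n, ∑ j ∈ Finset.range (i + 2), dd j) + dd 0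
        + ∑ j ∈ Finset.range (n + 2), ∑ k ∈ Finset.Ico (j + q) K, dd k)
      = ((n : ℝ) + 2) * ∑ k ∈ Finset.range K, dd k := by
    rw [hcomm]; linarith [h1, h2]
  -- r-part nonnegativity
  have hwj : ∀ j ∈ Finset.range n,
      (∑ s ∈ Finset.range q, (rr (s + (n + 1)) - rr (s + j)))
        = ((∑ k ∈ Finset.range j, rr k) - ∑ k ∈ Finset.range (n + 1), rr k)
          + ∑ k ∈ Finset.Ico (j + q) K, rr k := by
    intro j hj
    rw [Finset.mem_range] at hj
    rw [Finset.sum_sub_distrib, hshift rr (n + 1) q, hshift rr j q,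
        Finset.sum_Ico_eq_sub rr (show j + q ≤ K from by omega),
        show (n + 1) + q = K from by omega]
    ring
  have h5 : ∑ j ∈ Finset.range n, ∑ s ∈ Finset.range q, (rr (s + (n + 1)) - rr (s + j))
      = ((∑ j ∈ Finset.range n, ∑ k ∈ Finset.range j, rr k)
          - (n : ℝ) * ∑ k ∈ Finset.range (n + 1), rr k)
        + ∑ j ∈ Finset.range n, ∑ k ∈ Finset.Ico (j + q) K, rr k := by
    calc ∑ j ∈ Finset.range n, ∑ s ∈ Finset.range q, (rr (s + (n + 1)) - rr (s + j))
        = ∑ j ∈ Finset.range n,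
            (((∑ k ∈ Finset.range j, rr k) - ∑ k ∈ Finset.range (n + 1), rr k)
              + ∑ k ∈ Finset.Ico (j + q) K, rr k) := Finset.sum_congr rfl hwj
      _ = _ := by
          rw [Finset.sum_add_distrib, Finset.sum_sub_distrib, Finset.sum_const,
            Finset.card_range, nsmul_eq_mul]
  have hwcomm : ∑ s ∈ Finset.range q, ∑ j ∈ Finset.range n, (rr (s + (n + 1)) - rr (s + j))
      = ∑ j ∈ Finset.range n, ∑ s ∈ Finset.range q, (rr (s + (n + 1)) - rr (s + j)) :=
    Finset.sum_comm
  have hEr : ∑ j ∈ Finset.range (n + 2), ∑ k ∈ Finset.Ico (j + q) K, rr k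
      = (∑ j ∈ Finset.range n, ∑ k ∈ Finset.Ico (j + q) K, rr k) + rr (K - 1) := by
    rw [show n + 2 = (n + 1) + 1 from rfl, Finset.sum_range_succ, Finset.sum_range_succ]
    have e1 : ∑ k ∈ Finset.Ico ((n + 1) + q) K, rr k = 0 := by
      rw [show (n + 1) + q = K from by omega]; simp
    have e2 : ∑ k ∈ Finset.Ico (n + q) K, rr k = rr (K - 1) := by
      rw [Finset.sum_Ico_eq_sum_range, show K - (n + q) = 1 from by omega,
        Finset.sum_range_one, show n + q + 0 = K - 1 from by omega]
    rw [e1, e2]; ring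
  have hpj : ∀ i ∈ Finset.range n,
      ∑ j ∈ Finset.range i, (rr (i + 1) - rr j)
        = (i : ℝ) * rr (i + 1) - ∑ j ∈ Finset.range i, rr j := by
    intro i _
    rw [Finset.sum_sub_distrib, Finset.sum_const, Finset.card_range, nsmul_eq_mul]
  have hPsum : ∑ i ∈ Finset.range n, ∑ j ∈ Finset.range i, (rr (i + 1) - rr j)
      = (∑ i ∈ Finset.range n, (i : ℝ) * rr (i + 1))
        - ∑ i ∈ Finset.range n, ∑ j ∈ Finset.range i, rr j := by
    calc ∑ i ∈ Finset.range n, ∑ j ∈ Finset.range i, (rr (i + 1) - rr j)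
        = ∑ i ∈ Finset.range n, ((i : ℝ) * rr (i + 1) - ∑ j ∈ Finset.range i, rr j) :=
          Finset.sum_congr rfl hpj
      _ = _ := Finset.sum_sub_distrib _ _
  have hsucc : (n : ℝ) * (∑ k ∈ Finset.range (n + 1), rr k)
      = (n : ℝ) * (∑ i ∈ Finset.range n, rr (i + 1)) + (n : ℝ) * rr 0 := by
    rw [Finset.sum_range_succ' rr n]; ring
  have hmerge : ∑ i ∈ Finset.range n, (((i : ℝ) - (n : ℝ)) * rr (i + 1))
      = (∑ i ∈ Finset.range n, (i : ℝ) * rr (i + 1))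
        - (n : ℝ) * ∑ i ∈ Finset.range n, rr (i + 1) := by
    rw [Finset.mul_sum, ← Finset.sum_sub_distrib]
    exact Finset.sum_congr rfl fun i _ => by ring
  have hX6 : 0 ≤ ∑ i ∈ Finset.range n, (((i : ℝ) - (n : ℝ)) * rr (i + 1)) := by
    refine Finset.sum_nonneg fun i hi => ?_
    rw [Finset.mem_range] at hi
    have h7 : (i : ℝ) - (n : ℝ) ≤ 0 := by
      have : (i : ℝ) ≤ (n : ℝ) := by exact_mod_cast Nat.le_of_lt hi
      linarith
    nlinarith [hrr (i + 1)]
  have hn0 : 0 ≤ (n : ℝ) * (- rr 0) := mul_nonneg (Nat.cast_nonneg n) (by linarith [hrr 0])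
  have hRtot : 0 ≤ (∑ s ∈ Finset.range q, ∑ j ∈ Finset.range n, (rr (s + (n + 1)) - rr (s + j)))
      + ((∑ i ∈ Finset.range n, ∑ j ∈ Finset.range i, (rr (i + 1) - rr j)) + (- rr 0)
        + (- ∑ j ∈ Finset.range (n + 2), ∑ k ∈ Finset.Ico (j + q) K, rr k)) := by
    rw [hwcomm]
    have h8 := hrr (K - 1)
    have h9 := hrr 0
    linarith [h5, hEr, hPsum, hsucc, hmerge, hX6, hn0]
  -- assemble
  have hAs : A = (∑ s ∈ Finset.range q, ∑ j ∈ Finset.range (n + 2), dd (s + j))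
      + ∑ s ∈ Finset.range q, ∑ j ∈ Finset.range n, (rr (s + (n + 1)) - rr (s + j)) := by
    rw [hA, Finset.sum_add_distrib]
  have hBs : B = (∑ i ∈ Finset.range n, ∑ j ∈ Finset.range (i + 2), dd j)
      + ∑ i ∈ Finset.range n, ∑ j ∈ Finset.range i, (rr (i + 1) - rr j) := by
    rw [hBdef, Finset.sum_add_distrib]
  have hEs : E = (∑ j ∈ Finset.range (n + 2), ∑ k ∈ Finset.Ico (j + q) K, dd k)
      - ∑ j ∈ Finset.range (n + 2), ∑ k ∈ Finset.Ico (j + q) K, rr k := by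
    rw [hE]
    calc ∑ j ∈ Finset.range (n + 2), ∑ k ∈ Finset.Ico (j + q) K, (dd k - rr k)
        = ∑ j ∈ Finset.range (n + 2),
            ((∑ k ∈ Finset.Ico (j + q) K, dd k) - ∑ k ∈ Finset.Ico (j + q) K, rr k) :=
          Finset.sum_congr rfl fun j _ => Finset.sum_sub_distrib _ _
      _ = _ := Finset.sum_sub_distrib _ _
  have hlow : ((n : ℝ) + 2) * (∑ k ∈ Finset.range K, dd k)
      ≤ A + (B + (dd 0 - rr 0) + E) := by
    rw [hAs, hBs, hEs]
    linarith [hDtot, hRtot]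
  have hqr : (q : ℝ) = ((n : ℝ) + 2) * ((n : ℝ) + 2) - (n : ℝ) - 1 := by
    have h6 : q + (n + 1) = (n + 2) * (n + 2) := by omega
    have h7 : ((q : ℝ) + ((n : ℝ) + 1)) = ((n : ℝ) + 2) * ((n : ℝ) + 2) := by
      exact_mod_cast congrArg (fun t : ℕ => (t : ℝ)) h6
    linarith
  have hcoef : (q : ℝ) * D + ((n : ℝ) * D + D + ((n : ℝ) + 2) * ((n : ℝ) + 1) / 2 * D)
      = ((n : ℝ) + 2) * (3 * ((n : ℝ) + 2) / 2 - 1 / 2) * D := by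
    rw [hqr]; ring
  linarith [hlow, hAle, hBle, hCle, hEle, hcoef]

/-- for `K = m²` users with `0 ≥ r_1 ≥ … ≥ r_K` and all GDoF positive,
the family of binary bounds from Lemma 4 implies
`m · Σ_k d_k(α,r) ≤ m(3m/2 - 1/2) · D_{Σ,b}(α)`. -/
theorem stmt_15 (m : ℕ) (hm : 1 ≤ m)
    (α : Fin (m * m) → Fin (m * m) → ℝ) (hα : ∀ i j, 0 ≤ α i j)
    (r : Fin (m * m) → ℝ) (hr : ∀ k, r k ≤ 0)
    (hsort : ∀ i j : Fin (m * m), i ≤ j → r j ≤ r i)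
    (hpos : ∀ k, 0 < gdof α r k)
    (hB1 : ∀ β : Fin (m * m), gdof α r β - r β ≤ Dbin α)
    (hB : ∀ (L : ℕ) (hL2 : 2 ≤ L) (β : Fin L → Fin (m * m)), StrictMono β →
      (∑ i ∈ Finset.univ.erase (⟨L - 1, by omega⟩ : Fin L),
          (gdof α r (β i) + r (β ⟨L - 1, by omega⟩) - r (β i)))
        + (gdof α r (β ⟨L - 1, by omega⟩) + r (β ⟨L - 2, by omega⟩)
            - r (β ⟨L - 1, by omega⟩))
        ≤ Dbin α) :
    (m : ℝ) * (∑ k, gdof α r k) ≤ (m : ℝ) * (3 * (m : ℝ) / 2 - 1 / 2) * Dbin α := by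
  classical
  obtain hm1 | hm2 := eq_or_lt_of_le hm
  · -- m = 1
    subst hm1
    have h0 : (0 : ℕ) < 1 * 1 := by norm_num
    have hsum : (∑ k, gdof α r k) = gdof α r ⟨0, h0⟩ :=
      Fin.sum_univ_one (fun k => gdof α r k)
    rw [hsum]
    have h1 := hB1 ⟨0, h0⟩
    have h2 := hr ⟨0, h0⟩
    norm_num
    have h3 : (0 : Fin (1 * 1)) = ⟨0, h0⟩ := rfl
    rw [h3]
    linarith
  · -- 2 ≤ m
    set dd : ℕ → ℝ := fun t => if h : t < m * m then gdof α r ⟨t, h⟩ else 0 with hdd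
    set rr : ℕ → ℝ := fun t => if h : t < m * m then r ⟨t, h⟩ else 0 with hrr2
    have hgd : ∀ t (ht : t < m * m), gdof α r ⟨t, ht⟩ = dd t := by
      intro t ht; simp only [hdd]; rw [dif_pos ht]
    have hrd : ∀ t (ht : t < m * m), r ⟨t, ht⟩ = rr t := by
      intro t ht; simp only [hrr2]; rw [dif_pos ht]
    have hrr0 : ∀ k, rr k ≤ 0 := by
      intro k
      simp only [hrr2]
      split
      · exact hr _
      · exact le_refl 0
    have hsingle : ∀ k, k < m * m → dd k - rr k ≤ Dbin α := by
      intro k hk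
      have h := hB1 ⟨k, hk⟩
      rwa [hgd k hk, hrd k hk] at h
    have hwin : ∀ s L, 2 ≤ L → s + L ≤ m * m →
        (∑ j ∈ Finset.range L, dd (s + j))
          + (∑ j ∈ Finset.range (L - 2), (rr (s + (L - 1)) - rr (s + j))) ≤ Dbin α := by
      intro s L hL hsL
      obtain ⟨n, rfl⟩ : ∃ n, L = n + 2 := ⟨L - 2, by omega⟩
      have hmono : StrictMono (fun i : Fin (n + 2) => (⟨s + i.1, by omega⟩ : Fin (m * m))) := by
        intro a b hab
        have : a.1 < b.1 := hab
        simp only [Fin.mk_lt_mk]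
        omega
      have h := hB (n + 2) (by omega) (fun i : Fin (n + 2) => (⟨s + i.1, by omega⟩ : Fin (m * m))) hmono
      simp only [show n + 2 - 1 = n + 1 from rfl, show n + 2 - 2 = n from rfl, hgd, hrd] at h
      rw [show n + 2 - 2 = n from rfl, show n + 2 - 1 = n + 1 from rfl]
      have hE1 : ∑ x ∈ Finset.univ.erase (⟨n + 1, by omega⟩ : Fin (n + 2)),
          (dd (s + ↑x) + rr (s + (n + 1)) - rr (s + ↑x))
          = (∑ j ∈ Finset.range (n + 2), (dd (s + j) + rr (s + (n + 1)) - rr (s + j)))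
            - (dd (s + (n + 1)) + rr (s + (n + 1)) - rr (s + (n + 1))) := by
        rw [← Fin.sum_univ_eq_sum_range
          (fun j => dd (s + j) + rr (s + (n + 1)) - rr (s + j)) (n + 2)]
        rw [← Finset.sum_erase_add Finset.univ _
          (Finset.mem_univ (⟨n + 1, by omega⟩ : Fin (n + 2)))]
        have hv : ((⟨n + 1, by omega⟩ : Fin (n + 2)) : ℕ) = n + 1 := rfl
        simp only [hv]
        ring
      rw [hE1] at h
      have hE2 : ∑ j ∈ Finset.range (n + 2), (dd (s + j) + rr (s + (n + 1)) - rr (s + j))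
          = (∑ j ∈ Finset.range (n + 2), dd (s + j))
            + ∑ j ∈ Finset.range (n + 2), (rr (s + (n + 1)) - rr (s + j)) := by
        rw [← Finset.sum_add_distrib]
        exact Finset.sum_congr rfl fun j _ => by ring
      have hE3 : ∑ j ∈ Finset.range (n + 2), (rr (s + (n + 1)) - rr (s + j))
          = (∑ j ∈ Finset.range (n + 1), (rr (s + (n + 1)) - rr (s + j)))
            + (rr (s + (n + 1)) - rr (s + (n + 1))) :=
        Finset.sum_range_succ _ (n + 1)
      have hE4 : ∑ j ∈ Finset.range (n + 1), (rr (s + (n + 1)) - rr (s + j))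
          = (∑ j ∈ Finset.range n, (rr (s + (n + 1)) - rr (s + j)))
            + (rr (s + (n + 1)) - rr (s + n)) :=
        Finset.sum_range_succ _ n
      linarith [h, hE2, hE3, hE4]
    have hconv : (∑ k, gdof α r k) = ∑ j ∈ Finset.range (m * m), dd j := by
      rw [← Fin.sum_univ_eq_sum_range (fun j => dd j) (m * m)]
      refine Finset.sum_congr rfl fun k _ => ?_
      have h := hgd k.1 k.isLt
      rwa [Fin.eta] at h
    rw [hconv]
    exact aux_ineq m (by omega) dd rr (Dbin α) hrr0 hsingle hwin
end

section
/- The sum rate in a two-user Gaussian interference channel with TIN is maximized by binary power control: for all channel strengths α_11, α_12, α_21, α_22 ≥ 0, all P ≥ 1, and all power exponents r_1, r_2 ∈ [-∞, 0], the sum rate log₂(1 + P^{α_11+r_1}/(1 + P^{α_12+r_2})) + log₂(1 + P^{α_22+r_2}/(1 + P^{α_21+r_1})) is at most the maximum over the three binary choices (r_1,r_2) ∈ {(0,-∞), (-∞,0), (0,0)} of the same expression. -/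
open Finset

/-- Key 1D lemma: `x ↦ (a x + b)(c x + d)/(c x + e)` on `[0,1]` is maximized at an endpoint. -/
lemma tin_key (a b c d e x : ℝ) (ha : 0 ≤ a) (hb : 0 < b) (hc : 0 ≤ c) (he : 0 < e)
    (hde : e ≤ d) (hx0 : 0 ≤ x) (hx1 : x ≤ 1) :
    (a*x+b)*(c*x+d)/(c*x+e) ≤ max (b*d/e) ((a+b)*(c+d)/(c+e)) := by
  have hce : 0 < c*x+e := by nlinarith
  have hce1 : 0 < c+e := by linarith
  rcases le_total (a*e) (b*c) with hcase|hcase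
  · -- convex case: chord bound
    have poly : (a*x+b)*(c*x+d)*(e*(c+e)) ≤
        ((1-x)*(b*d*(c+e)) + x*((a+b)*(c+d)*e))*(c*x+e) := by
      nlinarith [mul_nonneg (mul_nonneg (mul_nonneg (sub_nonneg.2 hde) (sub_nonneg.2 hcase))
        hc) (mul_nonneg hx0 (sub_nonneg.2 hx1))]
    have chord : (a*x+b)*(c*x+d)/(c*x+e) ≤ (1-x)*(b*d/e) + x*((a+b)*(c+d)/(c+e)) := by
      have hrw : (1-x)*(b*d/e) + x*((a+b)*(c+d)/(c+e))
          = ((1-x)*(b*d*(c+e)) + x*((a+b)*(c+d)*e)) / (e*(c+e)) := by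
        field_simp
      rw [hrw, div_le_div_iff₀ hce (by positivity)]
      linarith [poly]
    refine chord.trans ?_
    have h0 : b*d/e ≤ max (b*d/e) ((a+b)*(c+d)/(c+e)) := le_max_left _ _
    have h1 : (a+b)*(c+d)/(c+e) ≤ max (b*d/e) ((a+b)*(c+d)/(c+e)) := le_max_right _ _
    nlinarith [mul_le_mul_of_nonneg_left h0 (by linarith : (0:ℝ) ≤ 1-x),
      mul_le_mul_of_nonneg_left h1 hx0]
  · -- monotone case: value at 1 dominates
    have poly : (a*x+b)*(c*x+d)*(c+e) ≤ (a+b)*(c+d)*(c*x+e) := by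
      nlinarith [mul_nonneg (sub_nonneg.2 hx1) (mul_nonneg (mul_nonneg ha hc)
          (mul_nonneg hx0 (by linarith : (0:ℝ) ≤ c+e))),
        mul_nonneg (sub_nonneg.2 hx1) (mul_nonneg (sub_nonneg.2 hcase) (sub_nonneg.2 hde)),
        mul_nonneg (sub_nonneg.2 hx1) (mul_nonneg (mul_nonneg ha he.le) (by linarith : (0:ℝ) ≤ c+e))]
    refine le_trans ?_ (le_max_right _ _)
    rw [div_le_div_iff₀ hce hce1]
    linarith [poly]

/-- The TIN sum-rate product. -/
noncomputable def tinF (A B C D x y : ℝ) : ℝ := (1 + A*x/(1+B*y)) * (1 + C*y/(1+D*x))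

lemma tinF_comm (A B C D x y : ℝ) : tinF A B C D x y = tinF C D A B y x := by
  unfold tinF; ring

lemma tinF_slice (A B C D x y : ℝ) (hA : 0 ≤ A) (hB : 0 ≤ B) (hC : 0 ≤ C) (hD : 0 ≤ D)
    (hx0 : 0 ≤ x) (hx1 : x ≤ 1) (hy0 : 0 ≤ y) (hy1 : y ≤ 1) :
    tinF A B C D x y ≤ max (tinF A B C D 0 y) (tinF A B C D 1 y) := by
  have hby : 0 < 1 + B*y := by nlinarith
  have hdx : 0 < 1 + D*x := by nlinarith
  have hd1 : 0 < 1 + D := by nlinarith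
  have key := tin_key A (1+B*y) D (1+C*y) 1 x hA hby hD one_pos
    (by nlinarith) hx0 hx1
  have hrw : tinF A B C D x y = (A*x+(1+B*y))*(D*x+(1+C*y))/(D*x+1) / (1+B*y) := by
    unfold tinF
    rw [div_div, eq_div_iff (by positivity)]
    field_simp
    ring
  have hrw0 : tinF A B C D 0 y = ((1+B*y)*(1+C*y)/1) / (1+B*y) := by
    unfold tinF
    rw [eq_div_iff (by positivity)]
    field_simp
    ring
  have hrw1 : tinF A B C D 1 y = ((A+(1+B*y))*(D+(1+C*y))/(D+1)) / (1+B*y) := by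
    unfold tinF
    rw [div_div, eq_div_iff (by positivity)]
    field_simp
    ring
  rw [hrw, hrw0, hrw1]
  rcases le_max_iff.mp key with h|h
  · exact le_max_of_le_left (div_le_div_of_nonneg_right h hby.le)
  · exact le_max_of_le_right (div_le_div_of_nonneg_right h hby.le)

/-- binary power control maximizes the TIN sum rate in the 2-user Gaussian
interference channel. Power exponents `r_i ∈ [-∞,0]` are represented by transmit power
fractions `p_i = P^{r_i} ∈ [0,1]`, so that `P^{α+r_i} = P^α · p_i`; the binary choices
`(0,-∞), (-∞,0), (0,0)` correspond to `(p₁,p₂) ∈ {(1,0),(0,1),(1,1)}`. -/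


theorem stmt_19 (a11 a12 a21 a22 : ℝ)
    (h11 : 0 ≤ a11) (h12 : 0 ≤ a12) (h21 : 0 ≤ a21) (h22 : 0 ≤ a22)
    (P : ℝ) (hP : 1 ≤ P)
    (p1 p2 : ℝ) (hp1 : p1 ∈ Set.Icc (0 : ℝ) 1) (hp2 : p2 ∈ Set.Icc (0 : ℝ) 1)
    (R : ℝ → ℝ → ℝ)
    (hR : ∀ q1 q2 : ℝ, R q1 q2 =
      Real.logb 2 (1 + P ^ a11 * q1 / (1 + P ^ a12 * q2)) +
      Real.logb 2 (1 + P ^ a22 * q2 / (1 + P ^ a21 * q1))) :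
    R p1 p2 ≤ max (R 1 0) (max (R 0 1) (R 1 1)) := by
  obtain ⟨hp10, hp11⟩ := hp1
  obtain ⟨hp20, hp21⟩ := hp2
  set A := P ^ a11 with hAdef
  set B := P ^ a12 with hBdef
  set C := P ^ a22 with hCdef
  set D := P ^ a21 with hDdef
  have hA : 1 ≤ A := Real.one_le_rpow hP h11
  have hB : 1 ≤ B := Real.one_le_rpow hP h12
  have hC : 1 ≤ C := Real.one_le_rpow hP h22
  have hD : 1 ≤ D := Real.one_le_rpow hP h21
  have hA0 : (0:ℝ) ≤ A := by linarith
  have hB0 : (0:ℝ) ≤ B := by linarith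
  have hC0 : (0:ℝ) ≤ C := by linarith
  have hD0 : (0:ℝ) ≤ D := by linarith
  -- positivity of factors
  have hfac : ∀ x y : ℝ, 0 ≤ x → 0 ≤ y →
      0 < 1 + A*x/(1+B*y) ∧ 0 < 1 + C*y/(1+D*x) := by
    intro x y hx hy
    have h1 : 0 < 1 + B*y := by nlinarith
    have h2 : 0 < 1 + D*x := by nlinarith
    constructor
    · have : 0 ≤ A*x/(1+B*y) := by positivity
      linarith
    · have : 0 ≤ C*y/(1+D*x) := by positivity
      linarith
  -- R as logb of tinF
  have hRf : ∀ x y : ℝ, 0 ≤ x → 0 ≤ y → R x y = Real.logb 2 (tinF A B C D x y) := by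
    intro x y hx hy
    obtain ⟨h1, h2⟩ := hfac x y hx hy
    rw [hR x y, tinF, Real.logb_mul h1.ne' h2.ne']
  -- product inequality
  have step1 : tinF A B C D p1 p2 ≤ max (tinF A B C D 0 p2) (tinF A B C D 1 p2) :=
    tinF_slice A B C D p1 p2 hA0 hB0 hC0 hD0 hp10 hp11 hp20 hp21
  have step2 : tinF A B C D 0 p2 ≤ max (tinF A B C D 0 0) (tinF A B C D 0 1) := by
    rw [tinF_comm A B C D 0 p2, tinF_comm A B C D 0 0, tinF_comm A B C D 0 1]
    exact tinF_slice C D A B p2 0 hC0 hD0 hA0 hB0 hp20 hp21 le_rfl zero_le_one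
  have step3 : tinF A B C D 1 p2 ≤ max (tinF A B C D 1 0) (tinF A B C D 1 1) := by
    rw [tinF_comm A B C D 1 p2, tinF_comm A B C D 1 0, tinF_comm A B C D 1 1]
    exact tinF_slice C D A B p2 1 hC0 hD0 hA0 hB0 hp20 hp21 zero_le_one le_rfl
  have h00le11 : tinF A B C D 0 0 ≤ tinF A B C D 1 1 := by
    unfold tinF
    have h1 : 0 < 1 + B*(1:ℝ) := by nlinarith
    have h2 : 0 < 1 + D*(1:ℝ) := by nlinarith
    have e1 : 0 ≤ A*1/(1+B*1) := by positivity
    have e2 : 0 ≤ C*1/(1+D*1) := by positivity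
    have : (1:ℝ) ≤ (1 + A*1/(1+B*1)) * (1 + C*1/(1+D*1)) := by nlinarith
    simpa using this
  have prod_le : tinF A B C D p1 p2 ≤
      max (tinF A B C D 1 0) (max (tinF A B C D 0 1) (tinF A B C D 1 1)) := by
    refine step1.trans (max_le ?_ ?_)
    · refine step2.trans (max_le ?_ ?_)
      · exact le_max_of_le_right (le_max_of_le_right h00le11)
      · exact le_max_of_le_right (le_max_left _ _)
    · refine step3.trans (max_le ?_ ?_)
      · exact le_max_left _ _
      · exact le_max_of_le_right (le_max_right _ _)
  -- positivity of tinF at p1 p2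
  have hpos : 0 < tinF A B C D p1 p2 := by
    obtain ⟨h1, h2⟩ := hfac p1 p2 hp10 hp20
    exact mul_pos h1 h2
  have hb2 : (1:ℝ) < 2 := one_lt_two
  rw [hRf p1 p2 hp10 hp20, hRf 1 0 zero_le_one le_rfl, hRf 0 1 le_rfl zero_le_one,
    hRf 1 1 zero_le_one zero_le_one]
  rcases le_max_iff.mp prod_le with h|h
  · exact le_max_of_le_left (Real.logb_le_logb_of_le hb2 hpos h)
  · rcases le_max_iff.mp h with h'|h'
    · exact le_max_of_le_right (le_max_of_le_left (Real.logb_le_logb_of_le hb2 hpos h'))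
    · exact le_max_of_le_right (le_max_of_le_right (Real.logb_le_logb_of_le hb2 hpos h'))
end
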